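/- For the bang-bang random walk on ℕ₀ with parameter q ∈ (0,1/2), the Green function of the walk killed just before its first positive hitting time of 0 satisfies: G_0(y,y) = (1 − (q/(1−q))^y)/(1−2q) for y > 0, G_0(x,y) = G_0(y,y) for x ≥ y > 0, and G_0(x,y) = (α^x − 1)/((1−2q)·α^y) for 0 < x ≤ y, where α = (1−q)/q. -/

import Mathlib

open MeasureTheory ENNReal
open scoped Classical NNReal

/-- A (time-homogeneous) Markov chain on a state space `E`, given by its
transition probabilities `p` and the family of path-space laws `P x` (the chain started
at `x`), characterized by its finite-dimensional distributions. -/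
structure MC (E : Type*) [MeasurableSpace E] where
  p : E → E → ℝ≥0∞
  P : E → Measure (ℕ → E)
  prob : ∀ x, IsProbabilityMeasure (P x)
  stochastic : ∀ x, ∑' y, p x y = 1
  fdd : ∀ (x : E) (n : ℕ) (xs : Fin (n + 1) → E),
    P x {ω | ∀ i : Fin (n + 1), ω i = xs i}
      = (if xs 0 = x then 1 else 0) * ∏ i : Fin n, p (xs i.castSucc) (xs i.succ)

/-- Irreducibility: every state is reachable from every state with positive probability. -/
def MC.Irreducible {E : Type*} [MeasurableSpace E] (M : MC E) : Prop :=
  ∀ x y : E, ∃ n : ℕ, 0 < M.P x {ω | ω n = y}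

/-- Recurrence: started from any state, the chain returns to that state infinitely often
almost surely. -/
def MC.Recurrent {E : Type*} [MeasurableSpace E] (M : MC E) : Prop :=
  ∀ x : E, M.P x {ω | ∀ N : ℕ, ∃ n, N ≤ n ∧ ω n = x} = 1

/-- Green function of the chain killed just before the first return time `T'_{x0}`:
`G_{x0}(x,y) = E_x[L^y_{T'_{x0} - 1}]`, the expected number of visits to `y` at times `n`
such that `x0` has not been visited at any time `1 ≤ k ≤ n`. -/
noncomputable def MC.green {E : Type*} [MeasurableSpace E] (M : MC E) (x0 x y : E) : ℝ≥0∞ :=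
  ∫⁻ ω, (∑' n : ℕ, if ω n = y ∧ ∀ k, 1 ≤ k → k ≤ n → ω k ≠ x0 then (1 : ℝ≥0∞) else 0) ∂ M.P x

/-- Transition probabilities of the "bang-bang" random walk on `ℕ` with parameter `q`:
`p(0,1) = 1`, and for `y ≥ 1`, `p(y, y+1) = q`, `p(y, y-1) = 1 - q`. -/
noncomputable def bangP (q : ℝ) : ℕ → ℕ → ℝ≥0∞ := fun x y =>
  if x = 0 then (if y = 1 then 1 else 0)
  else if y = x + 1 then ENNReal.ofReal q
  else if y + 1 = x then ENNReal.ofReal (1 - q)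
  else 0

/-!
Summing the finite-dimensional distributions over paths identifies `G₀(x, ·)`, for `x ≠ 0`, with
the series of Chung's taboo probabilities `∑ₙ ₀pⁿ(x, y)`. As a function of `x` this series
vanishes at `0`, satisfies the first-step equation
`G x = [x = y] + q G (x + 1) + (1 - q) G (x - 1)` for `x ≥ 1`, and is its minimal nonnegative
solution. The explicit function `(α ^ min x y - 1) / ((1 - 2q) α ^ y)` is a nonnegative solution
bounded by `1 / (1 - 2q)`, so the difference of the two is a bounded solution of the homogeneous
equation vanishing at `0`. Such solutions are `c (α ^ x - 1)`, and `α > 1` forces `c = 0`.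
-/

open Finset

noncomputable def pathWeight {E : Type*} (p : E → E → ℝ≥0∞) {n : ℕ} (v : Fin (n + 1) → E) :
    ℝ≥0∞ :=
  ∏ i : Fin n, p (v i.castSucc) (v i.succ)

/-- Chung's taboo probabilities `ₓ₀pⁿ(x, y)`. -/
noncomputable def tabooTrans {E : Type*} (p : E → E → ℝ≥0∞) (x0 : E) : ℕ → E → E → ℝ≥0∞
  | 0, x, y => if x ≠ x0 ∧ x = y then 1 else 0
  | n + 1, x, y => if x = x0 then 0 else ∑' z, p x z * tabooTrans p x0 n z y

section Taboo

variable {E : Type*} (p : E → E → ℝ≥0∞) (x0 : E)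

lemma pathWeight_cons {n : ℕ} (a : E) (w : Fin (n + 1) → E) :
    pathWeight p (Fin.cons a w : Fin (n + 2) → E) = p a (w 0) * pathWeight p w := by
  simp [pathWeight, Fin.prod_univ_succ]

lemma tsum_pathWeight_eq_tabooTrans (n : ℕ) (x y : E) :
    ∑' v : Fin (n + 1) → E,
        (if v 0 = x ∧ v (Fin.last n) = y ∧ ∀ i, v i ≠ x0 then pathWeight p v else 0)
      = tabooTrans p x0 n x y := by
  induction n generalizing x with
  | zero =>
    rw [← (Equiv.funUnique (Fin 1) E).symm.tsum_eq]
    simp only [Equiv.funUnique_symm_apply, pathWeight, univ_eq_empty, prod_empty,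
      tabooTrans, ite_and]
    by_cases hxy : x = y <;> simp [hxy]
  | succ n ih =>
    rw [← (Fin.consEquiv fun _ => E).tsum_eq, ENNReal.tsum_prod']
    dsimp only [Fin.consEquiv, Equiv.coe_fn_mk]
    simp only [Fin.forall_fin_succ (n := n + 1), Fin.cons_zero, Fin.cons_succ, ← Fin.succ_last,
      pathWeight_cons]
    rw [ENNReal.tsum_comm]
    simp only [ite_and, tsum_ite_eq]
    simp only [tabooTrans, ← ih, ← ENNReal.tsum_mul_left, mul_ite, mul_zero]
    by_cases hx : x = x0
    · simp [hx]
    · rw [if_neg hx, ENNReal.tsum_comm]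
      simp only [ite_and, tsum_ite_eq', if_pos hx]

lemma tabooTrans_self (n : ℕ) (y : E) : tabooTrans p x0 n x0 y = 0 := by
  cases n <;> simp [tabooTrans]

lemma tsum_tabooTrans_self (y : E) : ∑' n, tabooTrans p x0 n x0 y = 0 :=
  ENNReal.tsum_eq_zero.2 fun n => tabooTrans_self p x0 n y

lemma tsum_tabooTrans_of_ne [DecidableEq E] {x : E} (hx : x ≠ x0) (y : E) :
    ∑' n, tabooTrans p x0 n x y
      = (if x = y then 1 else 0) + ∑' z, p x z * ∑' n, tabooTrans p x0 n z y := by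
  rw [tsum_eq_zero_add' ENNReal.summable]
  simp [tabooTrans, hx, ← ENNReal.tsum_mul_left, ENNReal.tsum_comm (α := ℕ)]

lemma tsum_tabooTrans_le [DecidableEq E] {y : E} {h : E → ℝ≥0∞}
    (hh : ∀ x, x ≠ x0 → (if x = y then 1 else 0) + ∑' z, p x z * h z ≤ h x) (x : E) :
    ∑' n, tabooTrans p x0 n x y ≤ h x := by
  have hpartial (N : ℕ) : ∀ x, ∑ n ∈ range N, tabooTrans p x0 n x y ≤ h x := by
    induction N with
    | zero => simp
    | succ N ih =>
      intro x
      by_cases hx : x = x0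
      · simp [hx, tabooTrans_self]
      calc ∑ n ∈ range (N + 1), tabooTrans p x0 n x y
          = (if x = y then 1 else 0) + ∑' z, p x z * ∑ n ∈ range N, tabooTrans p x0 n z y := by
            rw [sum_range_succ', add_comm]
            simp [tabooTrans, hx, mul_sum, Summable.tsum_finsetSum, ENNReal.summable]
        _ ≤ (if x = y then 1 else 0) + ∑' z, p x z * h z := by gcongr with z; exact ih z
        _ ≤ h x := hh x hx
  rw [ENNReal.tsum_eq_iSup_nat]
  exact iSup_le fun N => hpartial N x

end Taboo

namespace MC

variable {E : Type*} [MeasurableSpace E] [Countable E] [MeasurableSingletonClass E]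

lemma measurableSet_setOf_initSegment_mem (n : ℕ) (S : Set (Fin (n + 1) → E)) :
    MeasurableSet {ω : ℕ → E | (fun i : Fin (n + 1) => ω i) ∈ S} :=
  measurable_pi_lambda _ (fun _ => measurable_pi_apply _) .of_discrete

lemma measure_setOf_initSegment_mem (M : MC E) (x : E) {n : ℕ} (S : Set (Fin (n + 1) → E)) :
    M.P x {ω | (fun i : Fin (n + 1) => ω i) ∈ S}
      = ∑' v, S.indicator (fun v => (if v 0 = x then 1 else 0) * pathWeight M.p v) v := by
  have hπ : Measurable fun (ω : ℕ → E) (i : Fin (n + 1)) => ω i :=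
    measurable_pi_lambda _ (fun _ => measurable_pi_apply _)
  have hcyl (v : Fin (n + 1) → E) : Measure.map (fun ω (i : Fin (n + 1)) => ω i) (M.P x) {v}
      = (if v 0 = x then 1 else 0) * pathWeight M.p v := by
    rw [Measure.map_apply hπ .of_discrete, pathWeight, ← M.fdd x n v]
    congr 1
    ext ω
    simp [funext_iff]
  change M.P x ((fun ω (i : Fin (n + 1)) => ω i) ⁻¹' S) = _
  rw [← Measure.map_apply hπ .of_discrete,
    ← Measure.tsum_indicator_apply_singleton _ _ .of_discrete]
  simp only [hcyl]

omit [MeasurableSpace E] [Countable E] [MeasurableSingletonClass E] in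
lemma setOf_avoid_eq_initSegment_mem (x0 y : E) (n : ℕ) :
    {ω : ℕ → E | ω n = y ∧ ∀ k, 1 ≤ k → k ≤ n → ω k ≠ x0}
      = {ω | (fun i : Fin (n + 1) => ω i) ∈
          {v | v (Fin.last n) = y ∧ ∀ i, i ≠ 0 → v i ≠ x0}} := by
  ext ω
  constructor
  · rintro ⟨hy, h⟩
    exact ⟨hy, fun i hi =>
      h i (Nat.one_le_iff_ne_zero.2 (Fin.val_ne_zero_iff.2 hi)) (Nat.lt_succ_iff.1 i.2)⟩
  · rintro ⟨hy, h⟩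
    exact ⟨hy, fun k hk1 hkn => h ⟨k, by omega⟩ (by simp [Fin.ext_iff]; omega)⟩

theorem green_eq_tsum_tabooTrans (M : MC E) {x0 x : E} (hx : x ≠ x0) (y : E) :
    M.green x0 x y = ∑' n, tabooTrans M.p x0 n x y := by
  have hmeas (n : ℕ) :
      MeasurableSet {ω : ℕ → E | ω n = y ∧ ∀ k, 1 ≤ k → k ≤ n → ω k ≠ x0} := by
    rw [setOf_avoid_eq_initSegment_mem]
    exact measurableSet_setOf_initSegment_mem n _
  calc M.green x0 x y
      = ∫⁻ ω, ∑' n, {ω : ℕ → E | ω n = y ∧ ∀ k, 1 ≤ k → k ≤ n → ω k ≠ x0}.indicator 1 ω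
          ∂M.P x := by
        simp only [green, Set.indicator_apply, Set.mem_ofPred_eq, Pi.one_apply]
        congr!
    _ = ∑' n, M.P x {ω | ω n = y ∧ ∀ k, 1 ≤ k → k ≤ n → ω k ≠ x0} := by
        rw [lintegral_tsum fun n => (measurable_one.indicator (hmeas n)).aemeasurable]
        simp only [lintegral_indicator_one (hmeas _)]
    _ = _ := by
        refine tsum_congr fun n => ?_
        rw [setOf_avoid_eq_initSegment_mem, measure_setOf_initSegment_mem,
          ← tsum_pathWeight_eq_tabooTrans]
        refine tsum_congr fun v => ?_
        rw [Set.indicator_apply]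
        by_cases h0 : v 0 = x
        · have hall : (∀ i, v i ≠ x0) ↔ ∀ i, i ≠ 0 → v i ≠ x0 :=
            ⟨fun h i _ => h i, fun h i => if hi : i = 0 then hi ▸ h0 ▸ hx else h i hi⟩
          simp [h0, hall]
        · simp [h0]

end MC

lemma tsum_bangP_mul (q : ℝ) {x : ℕ} (hx : x ≠ 0) (h : ℕ → ℝ≥0∞) :
    ∑' z, bangP q x z * h z
      = ENNReal.ofReal q * h (x + 1) + ENNReal.ofReal (1 - q) * h (x - 1) := by
  rw [tsum_eq_sum (s := {x + 1, x - 1}), sum_pair (by omega)]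
  · simp [bangP, hx, Nat.sub_add_cancel (Nat.one_le_iff_ne_zero.2 hx)]
  · intro z hz
    simp only [mem_insert, mem_singleton, not_or] at hz
    simp [bangP, hx, hz.1, show z + 1 ≠ x by omega]

lemma tsum_tabooTrans_bangP_of_ne_zero (q : ℝ) {x : ℕ} (hx : x ≠ 0) (y : ℕ) :
    ∑' n, tabooTrans (bangP q) 0 n x y
      = (if x = y then 1 else 0) + ENNReal.ofReal q * ∑' n, tabooTrans (bangP q) 0 n (x + 1) y
        + ENNReal.ofReal (1 - q) * ∑' n, tabooTrans (bangP q) 0 n (x - 1) y := by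
  rw [tsum_tabooTrans_of_ne _ _ hx, tsum_bangP_mul q hx, add_assoc]

lemma eq_zero_of_bounded_of_harmonic {q : ℝ} (hq0 : 0 < q) (hq : q ≤ 1 / 2) {u : ℕ → ℝ}
    {B : ℝ} (hB : ∀ x, |u x| ≤ B) (h0 : u 0 = 0)
    (hu : ∀ x, x ≠ 0 → u x = q * u (x + 1) + (1 - q) * u (x - 1)) : u = 0 := by
  set α := (1 - q) / q with hαdef
  have hα : 1 ≤ α := by rw [le_div_iff₀ hq0]; linarith
  have hqα : q * α = 1 - q := by rw [hαdef]; field_simp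
  have hinc (n : ℕ) : u (n + 1) - u n = u 1 * α ^ n := by
    induction n with
    | zero => simp [h0]
    | succ n ih =>
      have h := hu (n + 1) n.succ_ne_zero
      rw [Nat.add_sub_cancel] at h
      rw [pow_succ, ← mul_assoc, ← ih]
      apply mul_left_cancel₀ hq0.ne'
      linear_combination -h - (u (n + 1) - u n) * hqα
  have hsum (n : ℕ) : u n = u 1 * ∑ i ∈ range n, α ^ i := by
    rw [mul_sum, ← sum_congr rfl fun i _ => hinc i, sum_range_sub, h0, sub_zero]
  have hu1 : u 1 = 0 := by
    by_contra hne
    obtain ⟨n, hn⟩ := exists_nat_gt (B / |u 1|)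
    rw [div_lt_iff₀ (abs_pos.2 hne)] at hn
    have hgeom : (n : ℝ) ≤ ∑ i ∈ range n, α ^ i := by
      simpa using sum_le_sum fun i (_ : i ∈ range n) => one_le_pow₀ (n := i) hα
    have : |u 1| * n ≤ B := calc
      |u 1| * n ≤ |u 1| * ∑ i ∈ range n, α ^ i := by gcongr
      _ = |u n| := by
        rw [hsum n, abs_mul, abs_of_nonneg (a := ∑ i ∈ range n, α ^ i)
          (sum_nonneg fun i _ => pow_nonneg (by linarith) i)]
      _ ≤ B := hB n
    linarith
  funext n
  rw [hsum n, hu1, zero_mul, Pi.zero_apply]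

lemma ofReal_ite_add_mul_add_mul (P : Prop) [Decidable P] {q a b : ℝ} (hq0 : 0 ≤ q)
    (hq1 : q ≤ 1) (ha : 0 ≤ a) (hb : 0 ≤ b) :
    ENNReal.ofReal ((if P then 1 else 0) + q * a + (1 - q) * b)
      = (if P then 1 else 0) + ENNReal.ofReal q * ENNReal.ofReal a
        + ENNReal.ofReal (1 - q) * ENNReal.ofReal b := by
  have hP : (0 : ℝ) ≤ if P then 1 else 0 := by split_ifs <;> norm_num
  have hq1' : 0 ≤ 1 - q := by linarith
  rw [ENNReal.ofReal_add (by positivity) (by positivity), ENNReal.ofReal_add hP (by positivity),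
    ENNReal.ofReal_mul hq0, ENNReal.ofReal_mul hq1']
  split_ifs <;> simp

/-- `G₀(x, y)` of the statement, with `α = (1 - q) / q`; `min x y` merges the regimes `x ≤ y`
and `y ≤ x`. -/
noncomputable def bangGreen (q : ℝ) (x y : ℕ) : ℝ :=
  (((1 - q) / q) ^ min x y - 1) / ((1 - 2 * q) * ((1 - q) / q) ^ y)

lemma bangGreen_zero_left (q : ℝ) (y : ℕ) : bangGreen q 0 y = 0 := by
  simp [bangGreen]

section BangGreen

variable {q : ℝ} (hq0 : 0 < q) (hq : q < 1 / 2)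
include hq0 hq

lemma one_lt_one_sub_div_self : 1 < (1 - q) / q := by
  rw [lt_div_iff₀ hq0]; linarith

lemma bangGreen_nonneg (x y : ℕ) : 0 ≤ bangGreen q x y := by
  have hα := one_lt_one_sub_div_self hq0 hq
  have hpow := one_le_pow₀ (n := min x y) hα.le
  have h2q : 0 < 1 - 2 * q := by linarith
  exact div_nonneg (by linarith) (mul_pos h2q (pow_pos (zero_lt_one.trans hα) y)).le

lemma bangGreen_le (x y : ℕ) : bangGreen q x y ≤ 1 / (1 - 2 * q) := by
  have hα := one_lt_one_sub_div_self hq0 hq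
  have hpow := pow_le_pow_right₀ hα.le (min_le_right x y)
  have h2q : 0 < 1 - 2 * q := by linarith
  rw [bangGreen, div_le_div_iff₀ (mul_pos h2q (pow_pos (zero_lt_one.trans hα) y)) h2q]
  nlinarith

lemma bangGreen_eq {x : ℕ} (hx : x ≠ 0) (y : ℕ) :
    bangGreen q x y
      = (if x = y then 1 else 0) + q * bangGreen q (x + 1) y
        + (1 - q) * bangGreen q (x - 1) y := by
  set α := (1 - q) / q with hαdef
  have hqα : q * α = 1 - q := by rw [hαdef]; field_simp
  have hα : α ≠ 0 := (zero_lt_one.trans (one_lt_one_sub_div_self hq0 hq)).ne'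
  have h2q : 1 - 2 * q ≠ 0 := by linarith
  have key : α ^ min x y - 1 = (if x = y then (1 - 2 * q) * α ^ y else 0)
      + q * (α ^ min (x + 1) y - 1) + (1 - q) * (α ^ min (x - 1) y - 1) := by
    obtain ⟨x, rfl⟩ := Nat.exists_eq_succ_of_ne_zero hx
    rcases lt_trichotomy (x + 1) y with hxy | rfl | hxy
    · rw [if_neg hxy.ne, min_eq_left hxy.le, min_eq_left hxy, min_eq_left (by omega)]
      simp only [Nat.succ_sub_one, pow_succ]
      linear_combination (α ^ x * (1 - α)) * hqα
    · simp only [if_true, min_self, min_eq_right (Nat.le_succ _), Nat.succ_sub_one,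
        min_eq_left (Nat.le_succ x), pow_succ]
      linear_combination α ^ x * hqα
    · rw [if_neg hxy.ne', min_eq_right hxy.le, min_eq_right (by omega), min_eq_right (by omega)]
      ring
  simp only [bangGreen, ← hαdef, key]
  split_ifs
  · field_simp
  · field_simp
    ring

lemma tsum_tabooTrans_bangP_le (x y : ℕ) :
    ∑' n, tabooTrans (bangP q) 0 n x y ≤ ENNReal.ofReal (bangGreen q x y) := by
  refine tsum_tabooTrans_le (bangP q) 0 (h := fun x => ENNReal.ofReal (bangGreen q x y))
    (fun x hx => ?_) x
  rw [tsum_bangP_mul q hx, ← add_assoc, ← ofReal_ite_add_mul_add_mul _ hq0.le (by linarith)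
    (bangGreen_nonneg hq0 hq _ _) (bangGreen_nonneg hq0 hq _ _), ← bangGreen_eq hq0 hq hx]

theorem tsum_tabooTrans_bangP (x y : ℕ) :
    ∑' n, tabooTrans (bangP q) 0 n x y = ENNReal.ofReal (bangGreen q x y) := by
  set g : ℕ → ℝ≥0∞ := fun x => ∑' n, tabooTrans (bangP q) 0 n x y with hgdef
  have hle (x : ℕ) : g x ≤ ENNReal.ofReal (bangGreen q x y) := tsum_tabooTrans_bangP_le hq0 hq x y
  have hfin (x : ℕ) : g x = ENNReal.ofReal (g x).toReal :=
    (ENNReal.ofReal_toReal (ne_top_of_le_ne_top ENNReal.ofReal_ne_top (hle x))).symm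
  have hgr (x : ℕ) : 0 ≤ (g x).toReal ∧ (g x).toReal ≤ bangGreen q x y :=
    ⟨ENNReal.toReal_nonneg, ENNReal.toReal_le_of_le_ofReal (bangGreen_nonneg hq0 hq x y) (hle x)⟩
  have hdiff : (fun x => bangGreen q x y - (g x).toReal) = 0 := by
    refine eq_zero_of_bounded_of_harmonic hq0 hq.le (B := 1 / (1 - 2 * q)) (fun x => ?_) ?_
      (fun x hx => ?_)
    · have := bangGreen_le hq0 hq x y
      rw [abs_le]
      constructor <;> linarith [hgr x]
    · simp [bangGreen_zero_left, hgdef, tsum_tabooTrans_self]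
    · have hgx : g x = (if x = y then 1 else 0) + ENNReal.ofReal q * g (x + 1)
          + ENNReal.ofReal (1 - q) * g (x - 1) := tsum_tabooTrans_bangP_of_ne_zero q hx y
      rw [hfin (x + 1), hfin (x - 1),
        ← ofReal_ite_add_mul_add_mul _ hq0.le (by linarith) (hgr _).1 (hgr _).1] at hgx
      rw [bangGreen_eq hq0 hq hx y, hgx, ENNReal.toReal_ofReal]
      · ring
      · have := (hgr (x + 1)).1
        have := (hgr (x - 1)).1
        have : q ≤ 1 := by linarith
        split_ifs <;> positivity
  show g x = _
  rw [hfin x, sub_eq_zero.1 (congrFun hdiff x)]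

end BangGreen

/-- Green function formulas for the bang-bang random walk with parameter `q ∈ (0,1/2)`,
`α = (1-q)/q`, killed just before the first positive hitting time of `0`:
`G_0(y,y) = (1 − (q/(1−q))^y)/(1−2q)` for `y > 0`, `G_0(x,y) = G_0(y,y)` for `x ≥ y > 0`,
and `G_0(x,y) = (α^x − 1)/((1−2q)·α^y)` for `0 < x ≤ y`. -/
theorem bang_bang_green_killed
    (q : ℝ) (hq0 : 0 < q) (hq : q < 1 / 2) (M : MC ℕ) (hp : M.p = bangP q) :
    (∀ y : ℕ, 0 < y →
      M.green 0 y y = ENNReal.ofReal ((1 - (q / (1 - q)) ^ y) / (1 - 2 * q))) ∧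
    (∀ x y : ℕ, 0 < y → y ≤ x → M.green 0 x y = M.green 0 y y) ∧
    (∀ x y : ℕ, 0 < x → x ≤ y →
      M.green 0 x y
        = ENNReal.ofReal ((((1 - q) / q) ^ x - 1) / ((1 - 2 * q) * ((1 - q) / q) ^ y))) := by
  have hG (x y : ℕ) (hx : 0 < x) : M.green 0 x y = ENNReal.ofReal (bangGreen q x y) := by
    rw [MC.green_eq_tsum_tabooTrans M hx.ne' y, hp, tsum_tabooTrans_bangP hq0 hq]
  refine ⟨fun y hy => ?_, fun x y hy hyx => ?_, fun x y hx hxy => ?_⟩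
  · have hq1 : 1 - q ≠ 0 := by linarith
    have h2q : 1 - 2 * q ≠ 0 := by linarith
    rw [hG y y hy, bangGreen, min_self, div_pow, div_pow]
    congr 1
    field_simp
  · rw [hG x y (hy.trans_le hyx), hG y y hy, bangGreen, bangGreen, min_eq_right hyx, min_self]
  · rw [hG x y hx, bangGreen, min_eq_left hxy]
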